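/- arXiv:2506.19560 — 6 statements merged into one kernel-verified Lean document; each statement's English description precedes it below -/
import Mathlib

section
/- Let ℓ be an odd prime, d a positive integer, and ε ∈ ℤ/ℓ^dℤ an element whose reduction modulo ℓ is not a square in ℤ/ℓℤ. Let v ∈ (ℤ/ℓ^dℤ)² be a vector whose reduction modulo ℓ is nonzero. Then the orbit {M·v : M ∈ C_ns(ℓ^d, ε)} ⊆ (ℤ/ℓ^dℤ)² has exactly ℓ^{2d−2}·(ℓ² − 1) elements. -/
open Matrix

/-- The nonsplit Cartan set `C_ns(ℓ^d, ε)`: matrices `[[a, εb],[b, a]]` over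
`ℤ/ℓ^dℤ` with `a, b` not both divisible by `ℓ`. -/
def CartanNS (ℓ d : ℕ) (ε : ZMod (ℓ ^ d)) :
    Set (Matrix (Fin 2) (Fin 2) (ZMod (ℓ ^ d))) :=
  {M | ∃ a b : ZMod (ℓ ^ d),
    ¬ ((ℓ : ZMod (ℓ ^ d)) ∣ a ∧ (ℓ : ZMod (ℓ ^ d)) ∣ b) ∧ M = !![a, ε * b; b, a]}

section Aux

variable {ℓ d : ℕ}

lemma cartan_dvd_iff (hℓ : ℓ.Prime) (hd : 0 < d) (x : ZMod (ℓ ^ d)) :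
    (ℓ : ZMod (ℓ ^ d)) ∣ x ↔
      ZMod.castHom (dvd_pow_self ℓ hd.ne') (ZMod ℓ) x = 0 := by
  haveI : NeZero (ℓ ^ d) := ⟨pow_ne_zero d hℓ.pos.ne'⟩
  constructor
  · rintro ⟨y, rfl⟩
    rw [_root_.map_mul]
    simp
  · intro h
    have hx : ((x.val : ℕ) : ZMod ℓ) = 0 := by
      rwa [ZMod.castHom_apply, ← ZMod.natCast_val] at h
    obtain ⟨k, hk⟩ := (ZMod.natCast_eq_zero_iff _ _).mp hx
    refine ⟨(k : ZMod (ℓ ^ d)), ?_⟩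
    rw [← ZMod.natCast_zmod_val x, hk]
    push_cast
    ring

lemma cartan_isUnit (hℓ : ℓ.Prime) (hd : 0 < d) {x : ZMod (ℓ ^ d)}
    (h : ¬ (ℓ : ZMod (ℓ ^ d)) ∣ x) : IsUnit x := by
  haveI : NeZero (ℓ ^ d) := ⟨pow_ne_zero d hℓ.pos.ne'⟩
  have hval : ¬ ℓ ∣ x.val := by
    intro hdvd
    apply h
    rw [cartan_dvd_iff hℓ hd, ZMod.castHom_apply, ← ZMod.natCast_val]
    exact (ZMod.natCast_eq_zero_iff _ _).mpr hdvd
  rw [← ZMod.natCast_zmod_val x, ZMod.isUnit_iff_coprime]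
  exact Nat.Coprime.pow_right d ((hℓ.coprime_iff_not_dvd.mpr hval).symm)

lemma cartan_card_dvd (hℓ : ℓ.Prime) (hd : 0 < d) :
    Nat.card {x : ZMod (ℓ ^ d) // (ℓ : ZMod (ℓ ^ d)) ∣ x} = ℓ ^ (d - 1) := by
  haveI : NeZero (ℓ ^ d) := ⟨pow_ne_zero d hℓ.pos.ne'⟩
  have hpow : ℓ ^ (d - 1) * ℓ = ℓ ^ d := by
    rw [← pow_succ]; congr 1; omega
  have hbij : Function.Bijective
      (fun k : Fin (ℓ ^ (d - 1)) =>
        (⟨((ℓ * (k : ℕ) : ℕ) : ZMod (ℓ ^ d)),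
          ⟨((k : ℕ) : ZMod (ℓ ^ d)), by push_cast; ring⟩⟩ :
          {x : ZMod (ℓ ^ d) // (ℓ : ZMod (ℓ ^ d)) ∣ x})) := by
    constructor
    · intro k₁ k₂ hk
      have h1 : ℓ * (k₁ : ℕ) < ℓ ^ d := by
        calc ℓ * (k₁ : ℕ) < ℓ * ℓ ^ (d - 1) := by
              exact (Nat.mul_lt_mul_left hℓ.pos).mpr k₁.isLt
          _ = ℓ ^ d := by rw [mul_comm]; exact hpow
      have h2 : ℓ * (k₂ : ℕ) < ℓ ^ d := by
        calc ℓ * (k₂ : ℕ) < ℓ * ℓ ^ (d - 1) := by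
              exact (Nat.mul_lt_mul_left hℓ.pos).mpr k₂.isLt
          _ = ℓ ^ d := by rw [mul_comm]; exact hpow
      have := congrArg (fun x => (x : {x : ZMod (ℓ ^ d) // (ℓ : ZMod (ℓ ^ d)) ∣ x}).1.val) hk
      simp only [ZMod.val_natCast_of_lt h1, ZMod.val_natCast_of_lt h2] at this
      have : (k₁ : ℕ) = (k₂ : ℕ) := Nat.eq_of_mul_eq_mul_left hℓ.pos this
      exact Fin.ext this
    · rintro ⟨x, hx⟩
      have hvdvd : ℓ ∣ x.val := by
        rw [cartan_dvd_iff hℓ hd, ZMod.castHom_apply, ← ZMod.natCast_val] at hx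
        exact (ZMod.natCast_eq_zero_iff _ _).mp hx
      obtain ⟨k, hk⟩ := hvdvd
      have hklt : k < ℓ ^ (d - 1) := by
        have := x.val_lt
        rw [hk, ← hpow] at this
        exact lt_of_mul_lt_mul_right (by rwa [mul_comm ℓ k] at this) (Nat.zero_le _)
      refine ⟨⟨k, hklt⟩, ?_⟩
      apply Subtype.ext
      simp only
      rw [← hk, ZMod.natCast_zmod_val]
  calc Nat.card {x : ZMod (ℓ ^ d) // (ℓ : ZMod (ℓ ^ d)) ∣ x}
      = Nat.card (Fin (ℓ ^ (d - 1))) := (Nat.card_congr (Equiv.ofBijective _ hbij)).symm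
    _ = ℓ ^ (d - 1) := by simp

end Aux

/-- for an odd prime `ℓ`, `d ≥ 1`, `ε ∈ ℤ/ℓ^dℤ` a nonsquare mod `ℓ`,
and a vector `v ∈ (ℤ/ℓ^dℤ)²` whose reduction mod `ℓ` is nonzero, the orbit
`{M·v : M ∈ C_ns(ℓ^d, ε)}` has exactly `ℓ^{2d−2}·(ℓ² − 1)` elements. -/
theorem stmt7 (ℓ : ℕ) (hℓ : ℓ.Prime) (hodd : Odd ℓ) (d : ℕ) (hd : 0 < d)
    (ε : ZMod (ℓ ^ d))
    (hε : ¬ IsSquare (ZMod.castHom (dvd_pow_self ℓ hd.ne') (ZMod ℓ) ε))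
    (v : Fin 2 → ZMod (ℓ ^ d))
    (hv : ¬ ((ℓ : ZMod (ℓ ^ d)) ∣ v 0 ∧ (ℓ : ZMod (ℓ ^ d)) ∣ v 1)) :
    {w : Fin 2 → ZMod (ℓ ^ d) | ∃ M ∈ CartanNS ℓ d ε, w = M.mulVec v}.ncard =
      ℓ ^ (2 * d - 2) * (ℓ ^ 2 - 1) := by
  haveI : NeZero (ℓ ^ d) := ⟨pow_ne_zero d hℓ.pos.ne'⟩
  haveI : Fact ℓ.Prime := ⟨hℓ⟩
  set π := ZMod.castHom (dvd_pow_self ℓ hd.ne') (ZMod ℓ) with hπdef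
  -- the determinant-type quantity is a unit
  have hdet : IsUnit (v 0 * v 0 - ε * (v 1 * v 1)) := by
    apply cartan_isUnit hℓ hd
    rw [cartan_dvd_iff hℓ hd]
    intro h0
    rw [map_sub, _root_.map_mul, _root_.map_mul, _root_.map_mul] at h0
    by_cases h1 : π (v 1) = 0
    · rw [h1] at h0
      have h00 : π (v 0) * π (v 0) = 0 := by rw [← h0]; ring
      have h0z : π (v 0) = 0 := by
        rcases mul_eq_zero.mp h00 with h | h <;> exact h
      exact hv ⟨(cartan_dvd_iff hℓ hd (v 0)).mpr h0z,
        (cartan_dvd_iff hℓ hd (v 1)).mpr h1⟩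
    · apply hε
      refine ⟨π (v 0) * (π (v 1))⁻¹, ?_⟩
      have hinv : π (v 1) * (π (v 1))⁻¹ = 1 := mul_inv_cancel₀ h1
      have h0' : π (v 0) * π (v 0) = π ε * (π (v 1) * π (v 1)) := by
        exact sub_eq_zero.mp h0
      field_simp
      linear_combination -h0'
  -- the parameterization map
  set f : ZMod (ℓ ^ d) × ZMod (ℓ ^ d) → (Fin 2 → ZMod (ℓ ^ d)) :=
    fun p => ![p.1 * v 0 + ε * p.2 * v 1, p.2 * v 0 + p.1 * v 1] with hfdef
  have hmulvec : ∀ a b : ZMod (ℓ ^ d),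
      (!![a, ε * b; b, a]).mulVec v = f (a, b) := by
    intro a b
    funext i
    fin_cases i <;>
      simp [hfdef, Matrix.mulVec, dotProduct, Fin.sum_univ_two]
  have hinj : Function.Injective f := by
    rintro ⟨a, b⟩ ⟨a', b'⟩ h
    have e0 : a * v 0 + ε * b * v 1 = a' * v 0 + ε * b' * v 1 := by
      have := congrFun h 0
      simpa [hfdef] using this
    have e1 : b * v 0 + a * v 1 = b' * v 0 + a' * v 1 := by
      have := congrFun h 1
      simpa [hfdef] using this
    have ha : (a - a') * (v 0 * v 0 - ε * (v 1 * v 1)) = 0 := by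
      linear_combination v 0 * e0 - ε * v 1 * e1
    have hb : (b - b') * (v 0 * v 0 - ε * (v 1 * v 1)) = 0 := by
      linear_combination v 0 * e1 - v 1 * e0
    have ha' : a = a' := by
      have := (hdet.mul_left_eq_zero).mp ha
      exact sub_eq_zero.mp this
    have hb' : b = b' := by
      have := (hdet.mul_left_eq_zero).mp hb
      exact sub_eq_zero.mp this
    simp [ha', hb']
  set S : Set (ZMod (ℓ ^ d) × ZMod (ℓ ^ d)) :=
    {p | ¬ ((ℓ : ZMod (ℓ ^ d)) ∣ p.1 ∧ (ℓ : ZMod (ℓ ^ d)) ∣ p.2)} with hSdef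
  have hset : {w : Fin 2 → ZMod (ℓ ^ d) | ∃ M ∈ CartanNS ℓ d ε, w = M.mulVec v}
      = f '' S := by
    ext w
    constructor
    · rintro ⟨M, ⟨a, b, hab, rfl⟩, rfl⟩
      exact ⟨(a, b), hab, (hmulvec a b).symm⟩
    · rintro ⟨⟨a, b⟩, hab, rfl⟩
      exact ⟨!![a, ε * b; b, a], ⟨a, b, hab, rfl⟩, (hmulvec a b).symm⟩
  rw [hset, Set.ncard_image_of_injective _ hinj]
  -- counting S
  have hScompl : Sᶜ = {p : ZMod (ℓ ^ d) × ZMod (ℓ ^ d) |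
      (ℓ : ZMod (ℓ ^ d)) ∣ p.1 ∧ (ℓ : ZMod (ℓ ^ d)) ∣ p.2} := by
    ext p; simp [hSdef]
  have hcompl_card : Sᶜ.ncard = ℓ ^ (d - 1) * ℓ ^ (d - 1) := by
    rw [hScompl, ← Nat.card_coe_set_eq]
    have e : {p : ZMod (ℓ ^ d) × ZMod (ℓ ^ d) //
        (ℓ : ZMod (ℓ ^ d)) ∣ p.1 ∧ (ℓ : ZMod (ℓ ^ d)) ∣ p.2} ≃
        {x : ZMod (ℓ ^ d) // (ℓ : ZMod (ℓ ^ d)) ∣ x} ×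
        {x : ZMod (ℓ ^ d) // (ℓ : ZMod (ℓ ^ d)) ∣ x} :=
      Equiv.subtypeProdEquivProd
    have he := Nat.card_congr e
    rw [Nat.card_prod, cartan_card_dvd hℓ hd] at he
    exact he
  have htotal : S.ncard + Sᶜ.ncard = ℓ ^ d * ℓ ^ d := by
    rw [Set.ncard_add_ncard_compl S, Nat.card_prod, Nat.card_zmod]
  have hS_card : S.ncard = ℓ ^ d * ℓ ^ d - ℓ ^ (d - 1) * ℓ ^ (d - 1) := by
    omega
  rw [hS_card]
  -- arithmetic
  have hpow : ℓ ^ d = ℓ ^ (d - 1) * ℓ := by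
    rw [← pow_succ]; congr 1; omega
  have hpow2 : ℓ ^ (2 * d - 2) = ℓ ^ (d - 1) * ℓ ^ (d - 1) := by
    rw [← pow_add]; congr 1; omega
  rw [hpow, hpow2, Nat.mul_sub]
  ring_nf
end

section
/- Let ℓ be an odd prime, d a positive integer, and ε ∈ ℤ/ℓ^dℤ an element whose reduction modulo ℓ is not a square in ℤ/ℓℤ. Let v ∈ (ℤ/ℓ^dℤ)² be a vector whose reduction modulo ℓ is nonzero. If M = [[a, εb],[b, a]] ∈ C_ns(ℓ^d, ε) satisfies M·v ∈ (ℤ/ℓ^dℤ)·v (i.e., M·v lies in the cyclic submodule spanned by v), then b = 0; that is, M is the scalar matrix a·I. -/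
open Matrix

section Aux

/-- Field lemma over `ZMod ℓ`. -/
lemma aux_field {K : Type*} [Field K] (E T B x0 x1 : K)
    (hE : ¬ IsSquare E) (hx : ¬ (x0 = 0 ∧ x1 = 0))
    (h1 : T * x0 + E * B * x1 = 0) (h2 : T * x1 + B * x0 = 0) :
    B = 0 ∧ T = 0 := by
  have hE0 : E ≠ 0 := fun h => hE (h ▸ ⟨0, by ring⟩)
  have hB : B = 0 := by
    by_contra hB
    rcases eq_or_ne x0 0 with h0 | h0
    · have h1' : x1 ≠ 0 := fun h => hx ⟨h0, h⟩
      have hT : T = 0 := by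
        rw [h0, mul_zero, add_zero] at h2
        exact (mul_eq_zero.mp h2).resolve_right h1'
      rw [hT, h0, zero_mul, zero_add] at h1
      rcases mul_eq_zero.mp h1 with h | h
      · exact hB ((mul_eq_zero.mp h).resolve_left hE0)
      · exact h1' h
    · rcases eq_or_ne x1 0 with h1' | h1'
      · have hT : T = 0 := by
          rw [h1', mul_zero, add_zero] at h1
          exact (mul_eq_zero.mp h1).resolve_right h0
        rw [hT, h1', zero_mul, zero_add] at h2
        exact hB ((mul_eq_zero.mp h2).resolve_right h0)
      · -- both nonzero: T² = E B²
        have h3 : (T ^ 2 - E * B ^ 2) * (x0 * x1) = 0 := by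
          linear_combination (T * x1) * h1 - (E * B * x1) * h2
        have key : T ^ 2 - E * B ^ 2 = 0 :=
          (mul_eq_zero.mp h3).resolve_right (mul_ne_zero h0 h1')
        refine hE ⟨T * B⁻¹, ?_⟩
        field_simp
        linear_combination -key
  refine ⟨hB, ?_⟩
  rw [hB] at h1 h2
  simp only [mul_zero, zero_mul, add_zero] at h1 h2
  rcases eq_or_ne T 0 with h | h
  · exact h
  · exact absurd ⟨(mul_eq_zero.mp h1).resolve_left h,
      (mul_eq_zero.mp h2).resolve_left h⟩ hx

/-- `f x = 0 ↔ ℓ ∣ x` for the reduction map. -/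
lemma aux_red_zero_iff {ℓ : ℕ} (hℓ : ℓ.Prime) {d : ℕ} (hd : 0 < d) (x : ZMod (ℓ ^ d)) :
    ZMod.castHom (dvd_pow_self ℓ hd.ne') (ZMod ℓ) x = 0 ↔ (ℓ : ZMod (ℓ ^ d)) ∣ x := by
  haveI : NeZero (ℓ ^ d) := ⟨pow_ne_zero d hℓ.ne_zero⟩
  constructor
  · intro h
    have hx : ((x.val : ℕ) : ZMod ℓ) = 0 := by
      rwa [ZMod.natCast_val]
    have hdvd : (ℓ : ℕ) ∣ x.val := (ZMod.natCast_eq_zero_iff _ _).mp hx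
    obtain ⟨m, hm⟩ := hdvd
    refine ⟨(m : ZMod (ℓ ^ d)), ?_⟩
    have hid : ((x.val : ℕ) : ZMod (ℓ ^ d)) = x := by
      rw [ZMod.natCast_val, ZMod.cast_id]
    rw [← hid, hm]
    push_cast; ring
  · rintro ⟨y, rfl⟩
    rw [_root_.map_mul, map_natCast, ZMod.natCast_self, zero_mul]

/-- If `ℓ^e * x = 0` with `e < d`, then `ℓ ∣ x`. -/
lemma aux_pow_mul_zero {ℓ : ℕ} (hℓ : ℓ.Prime) {d : ℕ} {e : ℕ} (he : e < d)
    (x : ZMod (ℓ ^ d))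
    (h : (ℓ : ZMod (ℓ ^ d)) ^ e * x = 0) : (ℓ : ZMod (ℓ ^ d)) ∣ x := by
  haveI : NeZero (ℓ ^ d) := ⟨pow_ne_zero d hℓ.ne_zero⟩
  have hx : ((ℓ ^ e * x.val : ℕ) : ZMod (ℓ ^ d)) = 0 := by
    push_cast
    rw [ZMod.natCast_val, ZMod.cast_id]
    exact h
  have hdvd : ℓ ^ d ∣ ℓ ^ e * x.val := (ZMod.natCast_eq_zero_iff _ _).mp hx
  have h2 : ℓ ^ (e + 1) ∣ ℓ ^ e * x.val := dvd_trans (pow_dvd_pow ℓ he) hdvd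
  have hl : ℓ ∣ x.val := by
    rw [pow_succ] at h2
    exact (mul_dvd_mul_iff_left (pow_ne_zero e hℓ.ne_zero)).mp h2
  obtain ⟨m, hm⟩ := hl
  refine ⟨(m : ZMod (ℓ ^ d)), ?_⟩
  have hid : ((x.val : ℕ) : ZMod (ℓ ^ d)) = x := by
    rw [ZMod.natCast_val, ZMod.cast_id]
  rw [← hid, hm]; push_cast; ring

end Aux

/-- for an odd prime `ℓ`, `d ≥ 1`, `ε ∈ ℤ/ℓ^dℤ` a nonsquare mod `ℓ`,
and a vector `v ∈ (ℤ/ℓ^dℤ)²` whose reduction mod `ℓ` is nonzero, if a matrix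
`M = [[a, εb],[b, a]]` of `C_ns(ℓ^d, ε)` maps `v` into the cyclic submodule
spanned by `v`, then `b = 0`, i.e. `M` is the scalar matrix `a·I`. -/
theorem stmt8 (ℓ : ℕ) (hℓ : ℓ.Prime) (hodd : Odd ℓ) (d : ℕ) (hd : 0 < d)
    (ε : ZMod (ℓ ^ d))
    (hε : ¬ IsSquare (ZMod.castHom (dvd_pow_self ℓ hd.ne') (ZMod ℓ) ε))
    (v : Fin 2 → ZMod (ℓ ^ d))
    (hv : ¬ ((ℓ : ZMod (ℓ ^ d)) ∣ v 0 ∧ (ℓ : ZMod (ℓ ^ d)) ∣ v 1))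
    (a b : ZMod (ℓ ^ d))
    (hab : ¬ ((ℓ : ZMod (ℓ ^ d)) ∣ a ∧ (ℓ : ZMod (ℓ ^ d)) ∣ b))
    (hspan : (!![a, ε * b; b, a]).mulVec v ∈ Submodule.span (ZMod (ℓ ^ d)) {v}) :
    b = 0 ∧ !![a, ε * b; b, a] = a • (1 : Matrix (Fin 2) (Fin 2) (ZMod (ℓ ^ d))) := by
  haveI := Fact.mk hℓ
  set f := ZMod.castHom (dvd_pow_self ℓ hd.ne') (ZMod ℓ) with hf
  obtain ⟨c, hc⟩ := Submodule.mem_span_singleton.mp hspan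
  set t := a - c with ht
  have h1 : t * v 0 + ε * b * v 1 = 0 := by
    have h := congrFun hc 0
    simp [Matrix.mulVec, dotProduct, Fin.sum_univ_two] at h
    rw [ht]; linear_combination -h
  have h2 : t * v 1 + b * v 0 = 0 := by
    have h := congrFun hc 1
    simp [Matrix.mulVec, dotProduct, Fin.sum_univ_two] at h
    rw [ht]; linear_combination -h
  have hvf : ¬ (f (v 0) = 0 ∧ f (v 1) = 0) := by
    rw [aux_red_zero_iff hℓ hd, aux_red_zero_iff hℓ hd]; exact hv
  -- main induction
  have main : ∀ e, e ≤ d → ∃ t' b', t = (ℓ : ZMod (ℓ ^ d)) ^ e * t' ∧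
      b = (ℓ : ZMod (ℓ ^ d)) ^ e * b' := by
    intro e
    induction e with
    | zero => intro _; exact ⟨t, b, by simp, by simp⟩
    | succ e ih =>
      intro hed
      obtain ⟨t', b', htt, hbb⟩ := ih (Nat.le_of_succ_le hed)
      have hed' : e < d := hed
      have h1' : (ℓ : ZMod (ℓ ^ d)) ^ e * (t' * v 0 + ε * b' * v 1) = 0 := by
        rw [htt, hbb] at h1; linear_combination h1
      have h2' : (ℓ : ZMod (ℓ ^ d)) ^ e * (t' * v 1 + b' * v 0) = 0 := by
        rw [htt, hbb] at h2; linear_combination h2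
      have hf1 : f t' * f (v 0) + f ε * f b' * f (v 1) = 0 := by
        have h := (aux_red_zero_iff hℓ hd _).mpr (aux_pow_mul_zero hℓ hed' _ h1')
        simp only [map_add, _root_.map_mul] at h
        exact h
      have hf2 : f t' * f (v 1) + f b' * f (v 0) = 0 := by
        have h := (aux_red_zero_iff hℓ hd _).mpr (aux_pow_mul_zero hℓ hed' _ h2')
        simp only [map_add, _root_.map_mul] at h
        linear_combination h
      obtain ⟨hb0, ht0⟩ := aux_field (f ε) (f t') (f b') (f (v 0)) (f (v 1)) hε hvf hf1 hf2
      obtain ⟨t'', htt'⟩ := (aux_red_zero_iff hℓ hd _).mp ht0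
      obtain ⟨b'', hbb'⟩ := (aux_red_zero_iff hℓ hd _).mp hb0
      exact ⟨t'', b'', by rw [htt, htt', pow_succ]; ring, by rw [hbb, hbb', pow_succ]; ring⟩
  obtain ⟨t', b', _, hbb⟩ := main d le_rfl
  have hl0 : ((ℓ : ZMod (ℓ ^ d))) ^ d = 0 := by
    have h := ZMod.natCast_self (ℓ ^ d)
    push_cast at h; exact h
  have hb0 : b = 0 := by rw [hbb, hl0, zero_mul]
  refine ⟨hb0, ?_⟩
  subst hb0
  ext i j
  fin_cases i <;> fin_cases j <;> simp [Matrix.one_apply]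
end

section
/- Let ℓ be an odd prime, d a positive integer, and ε ∈ ℤ/ℓ^dℤ an element whose reduction modulo ℓ is not a square in ℤ/ℓℤ. Let v ∈ (ℤ/ℓ^dℤ)² be a vector whose reduction modulo ℓ is nonzero. Then the set of ℤ/ℓ^dℤ-submodules { span(M·v) : M ∈ C_ns(ℓ^d, ε) } of (ℤ/ℓ^dℤ)² has exactly ℓ^{d−1}·(ℓ + 1) elements. -/
open Matrix

lemma mulVec_two {R : Type*} [CommRing R] (a b c d : R) (w : Fin 2 → R) :
    Matrix.mulVec !![a, b; c, d] w = ![a * w 0 + b * w 1, c * w 0 + d * w 1] := by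
  funext i; fin_cases i <;> simp [Matrix.mulVec, dotProduct, Fin.sum_univ_two]

lemma aux_dvd {ℓ d : ℕ} (hℓ : ℓ.Prime) (hd : 0 < d) (x : ZMod (ℓ ^ d)) :
    (ℓ : ZMod (ℓ ^ d)) ∣ x ↔ ZMod.castHom (dvd_pow_self ℓ hd.ne') (ZMod ℓ) x = 0 := by
  haveI : Fact ℓ.Prime := ⟨hℓ⟩
  haveI : NeZero (ℓ ^ d) := ⟨pow_ne_zero d hℓ.pos.ne'⟩
  constructor
  · rintro ⟨c, rfl⟩
    rw [_root_.map_mul, map_natCast, ZMod.natCast_self, zero_mul]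
  · intro h
    rw [ZMod.castHom_apply, ← ZMod.natCast_val] at h
    obtain ⟨c, hc⟩ := (ZMod.natCast_eq_zero_iff _ _).mp h
    refine ⟨(c : ZMod (ℓ ^ d)), ?_⟩
    rw [← Nat.cast_mul, ← hc, ZMod.natCast_val, ZMod.cast_id]

lemma aux_unit {ℓ d : ℕ} (hℓ : ℓ.Prime) (hd : 0 < d) (x : ZMod (ℓ ^ d)) :
    IsUnit x ↔ ¬ (ℓ : ZMod (ℓ ^ d)) ∣ x := by
  haveI : Fact ℓ.Prime := ⟨hℓ⟩
  haveI : NeZero (ℓ ^ d) := ⟨pow_ne_zero d hℓ.pos.ne'⟩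
  rw [aux_dvd hℓ hd]
  constructor
  · intro hx h
    have := hx.map (ZMod.castHom (dvd_pow_self ℓ hd.ne') (ZMod ℓ))
    rw [h] at this
    exact this.ne_zero rfl
  · intro h
    have h1 : ¬ ℓ ∣ x.val := by
      intro hdvd'
      apply h
      rw [ZMod.castHom_apply, ← ZMod.natCast_val]
      exact (ZMod.natCast_eq_zero_iff _ _).mpr hdvd'
    have h2 : Nat.Coprime x.val (ℓ ^ d) :=
      Nat.Coprime.pow_right _ (Nat.coprime_comm.mp (hℓ.coprime_iff_not_dvd.mpr h1))
    have := (ZMod.isUnit_iff_coprime x.val (ℓ ^ d)).mpr h2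
    rwa [ZMod.natCast_val, ZMod.cast_id] at this

/-- nonsquare discriminant gives unit norm form -/
lemma aux_norm_unit {ℓ d : ℕ} (hℓ : ℓ.Prime) (hd : 0 < d) (ε : ZMod (ℓ ^ d))
    (hε : ¬ IsSquare (ZMod.castHom (dvd_pow_self ℓ hd.ne') (ZMod ℓ) ε))
    (x y : ZMod (ℓ ^ d))
    (hxy : ¬ ((ℓ : ZMod (ℓ ^ d)) ∣ x ∧ (ℓ : ZMod (ℓ ^ d)) ∣ y)) :
    IsUnit (x ^ 2 - ε * y ^ 2) := by
  haveI : Fact ℓ.Prime := ⟨hℓ⟩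
  set π := ZMod.castHom (dvd_pow_self ℓ hd.ne') (ZMod ℓ) with hπ
  rw [aux_unit hℓ hd, aux_dvd hℓ hd]
  intro h0
  rw [map_sub, map_pow, _root_.map_mul, map_pow] at h0
  by_cases hY : π y = 0
  · rw [hY] at h0
    have hX : π x = 0 := by
      have : π x ^ 2 = 0 := by linear_combination h0
      exact pow_eq_zero_iff (two_ne_zero) |>.mp this
    exact hxy ⟨(aux_dvd hℓ hd x).mpr hX, (aux_dvd hℓ hd y).mpr hY⟩
  · apply hε
    refine ⟨π x * (π y)⁻¹, ?_⟩
    have hy' : π y * (π y)⁻¹ = 1 := mul_inv_cancel₀ hY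
    linear_combination (-(π y)⁻¹ ^ 2) * h0 - π ε * (π y * (π y)⁻¹ + 1) * hy'


/-- for an odd prime `ℓ`, `d ≥ 1`, `ε ∈ ℤ/ℓ^dℤ` a nonsquare mod `ℓ`,
and a vector `v ∈ (ℤ/ℓ^dℤ)²` whose reduction mod `ℓ` is nonzero, the set of
cyclic submodules `span(M·v)` for `M ∈ C_ns(ℓ^d, ε)` has exactly
`ℓ^{d−1}·(ℓ + 1)` elements. -/
theorem stmt9 (ℓ : ℕ) (hℓ : ℓ.Prime) (hodd : Odd ℓ) (d : ℕ) (hd : 0 < d)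
    (ε : ZMod (ℓ ^ d))
    (hε : ¬ IsSquare (ZMod.castHom (dvd_pow_self ℓ hd.ne') (ZMod ℓ) ε))
    (v : Fin 2 → ZMod (ℓ ^ d))
    (hv : ¬ ((ℓ : ZMod (ℓ ^ d)) ∣ v 0 ∧ (ℓ : ZMod (ℓ ^ d)) ∣ v 1)) :
    {W : Submodule (ZMod (ℓ ^ d)) (Fin 2 → ZMod (ℓ ^ d)) |
      ∃ M ∈ CartanNS ℓ d ε, W = Submodule.span (ZMod (ℓ ^ d)) {M.mulVec v}}.ncard =
      ℓ ^ (d - 1) * (ℓ + 1) := by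
  haveI : Fact ℓ.Prime := ⟨hℓ⟩
  haveI : NeZero (ℓ ^ d) := ⟨pow_ne_zero d hℓ.pos.ne'⟩
  have hone : ¬ (ℓ : ZMod (ℓ ^ d)) ∣ (1 : ZMod (ℓ ^ d)) := by
    rw [aux_dvd hℓ hd, _root_.map_one]
    exact one_ne_zero
  -- the set of spans of primitive vectors
  set T : Set (Submodule (ZMod (ℓ ^ d)) (Fin 2 → ZMod (ℓ ^ d))) :=
    {W | ∃ w : Fin 2 → ZMod (ℓ ^ d), (¬ ((ℓ : ZMod (ℓ ^ d)) ∣ w 0 ∧ (ℓ : ZMod (ℓ ^ d)) ∣ w 1)) ∧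
      W = Submodule.span (ZMod (ℓ ^ d)) {w}} with hT
  -- Step A : the orbit-span set equals T
  have hST : {W : Submodule (ZMod (ℓ ^ d)) (Fin 2 → ZMod (ℓ ^ d)) |
      ∃ M ∈ CartanNS ℓ d ε, W = Submodule.span (ZMod (ℓ ^ d)) {M.mulVec v}} = T := by
    ext W
    constructor
    · rintro ⟨M, ⟨a, b, hab, rfl⟩, rfl⟩
      refine ⟨Matrix.mulVec !![a, ε * b; b, a] v, ?_, rfl⟩
      rw [mulVec_two]
      obtain ⟨u, hu⟩ := (aux_norm_unit hℓ hd ε hε a b hab).exists_right_inv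
      rintro ⟨h0, h1⟩
      simp only [Matrix.cons_val_zero, Matrix.cons_val_one, Matrix.head_cons] at h0 h1
      apply hv
      constructor
      · have hv0 : v 0 = u * a * (a * v 0 + ε * b * v 1) -
            u * (ε * b) * (b * v 0 + a * v 1) := by
          linear_combination (-(v 0)) * hu
        rw [hv0]
        exact dvd_sub (h0.mul_left _) (h1.mul_left _)
      · have hv1 : v 1 = u * a * (b * v 0 + a * v 1) -
            u * b * (a * v 0 + ε * b * v 1) := by
          linear_combination (-(v 1)) * hu
        rw [hv1]
        exact dvd_sub (h1.mul_left _) (h0.mul_left _)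
    · rintro ⟨w, hw, rfl⟩
      obtain ⟨c, hc⟩ := (aux_norm_unit hℓ hd ε hε (v 0) (v 1) hv).exists_right_inv
      set a : ZMod (ℓ ^ d) := (w 0 * v 0 - ε * w 1 * v 1) * c with ha
      set b : ZMod (ℓ ^ d) := (w 1 * v 0 - w 0 * v 1) * c with hb
      have hMv : Matrix.mulVec !![a, ε * b; b, a] v = w := by
        rw [mulVec_two]
        funext i
        fin_cases i
        · show a * v 0 + ε * b * v 1 = w 0
          rw [ha, hb]
          linear_combination (w 0) * hc
        · show b * v 0 + a * v 1 = w 1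
          rw [ha, hb]
          linear_combination (w 1) * hc
      refine ⟨!![a, ε * b; b, a], ⟨a, b, ?_, rfl⟩, by rw [hMv]⟩
      rintro ⟨hda, hdb⟩
      apply hw
      have h0 : w 0 = a * v 0 + ε * b * v 1 := by
        rw [← hMv, mulVec_two]; simp
      have h1 : w 1 = b * v 0 + a * v 1 := by
        rw [← hMv, mulVec_two]; simp
      constructor
      · rw [h0]
        exact dvd_add ((hda.mul_right _)) (((hdb.mul_left ε).mul_right _))
      · rw [h1]
        exact dvd_add (hdb.mul_right _) (hda.mul_right _)
  rw [hST]
  -- parametrization of primitive lines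
  set f : Fin (ℓ ^ d) ⊕ Fin (ℓ ^ (d - 1)) → Submodule (ZMod (ℓ ^ d)) (Fin 2 → ZMod (ℓ ^ d)) :=
    Sum.elim
      (fun t => Submodule.span (ZMod (ℓ ^ d)) {![1, ((t : ℕ) : ZMod (ℓ ^ d))]})
      (fun s => Submodule.span (ZMod (ℓ ^ d))
        {![(ℓ : ZMod (ℓ ^ d)) * ((s : ℕ) : ZMod (ℓ ^ d)), 1]}) with hf
  have hspan_mem : ∀ x y : Fin 2 → ZMod (ℓ ^ d),
      Submodule.span (ZMod (ℓ ^ d)) {x} = Submodule.span (ZMod (ℓ ^ d)) {y} →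
      ∃ c : ZMod (ℓ ^ d), c • y = x := by
    intro x y h
    have hx : x ∈ Submodule.span (ZMod (ℓ ^ d)) {y} := by
      rw [← h]; exact Submodule.mem_span_singleton_self x
    exact Submodule.mem_span_singleton.mp hx
  have hlp : (ℓ : ZMod (ℓ ^ d)) * (ℓ : ZMod (ℓ ^ d)) ^ (d - 1) = 0 := by
    rw [← pow_succ', Nat.sub_add_cancel hd, ← Nat.cast_pow, ZMod.natCast_self]
  have hTR : T = Set.range f := by
    ext W
    constructor
    · rintro ⟨w, hw, rfl⟩
      by_cases hw0 : (ℓ : ZMod (ℓ ^ d)) ∣ w 0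
      · -- second chart
        have hw1 : ¬ (ℓ : ZMod (ℓ ^ d)) ∣ w 1 := fun h => hw ⟨hw0, h⟩
        obtain ⟨c, hc⟩ := ((aux_unit hℓ hd (w 1)).mpr hw1).exists_right_inv
        obtain ⟨x, hx⟩ := hw0
        set y : ZMod (ℓ ^ d) := c * x with hy
        have hsm : w = (w 1) • ![(ℓ : ZMod (ℓ ^ d)) * y, 1] := by
          funext i; fin_cases i
          · show w 0 = w 1 * ((ℓ : ZMod (ℓ ^ d)) * y)
            rw [hx, hy]
            linear_combination (-(ℓ : ZMod (ℓ ^ d)) * x) * hc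
          · show w 1 = w 1 * 1
            rw [mul_one]
        have hsp : Submodule.span (ZMod (ℓ ^ d)) {w} =
            Submodule.span (ZMod (ℓ ^ d)) {![(ℓ : ZMod (ℓ ^ d)) * y, 1]} := by
          conv_lhs => rw [hsm]
          exact Submodule.span_singleton_smul_eq ((aux_unit hℓ hd (w 1)).mpr hw1) _
        have hkey : (ℓ : ZMod (ℓ ^ d)) * y =
            (ℓ : ZMod (ℓ ^ d)) * ((y.val % ℓ ^ (d - 1) : ℕ) : ZMod (ℓ ^ d)) := by
          have h1 : y = ((ℓ ^ (d - 1) * (y.val / ℓ ^ (d - 1)) + y.val % ℓ ^ (d - 1) : ℕ) :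
              ZMod (ℓ ^ d)) := by
            rw [Nat.div_add_mod, ZMod.natCast_val, ZMod.cast_id]
          conv_lhs => rw [h1]
          push_cast
          linear_combination ((y.val / ℓ ^ (d - 1) : ℕ) : ZMod (ℓ ^ d)) * hlp
        refine ⟨Sum.inr ⟨y.val % ℓ ^ (d - 1), Nat.mod_lt _ (pow_pos hℓ.pos _)⟩, ?_⟩
        simp only [hf, Sum.elim_inr]
        rw [← hkey, ← hsp]
      · -- first chart
        obtain ⟨c, hc⟩ := ((aux_unit hℓ hd (w 0)).mpr hw0).exists_right_inv
        have hsm : w = (w 0) • ![1, c * w 1] := by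
          funext i; fin_cases i
          · show w 0 = w 0 * 1
            rw [mul_one]
          · show w 1 = w 0 * (c * w 1)
            linear_combination (-(w 1)) * hc
        have hsp : Submodule.span (ZMod (ℓ ^ d)) {w} =
            Submodule.span (ZMod (ℓ ^ d)) {![1, c * w 1]} := by
          conv_lhs => rw [hsm]
          exact Submodule.span_singleton_smul_eq ((aux_unit hℓ hd (w 0)).mpr hw0) _
        refine ⟨Sum.inl ⟨(c * w 1).val, ZMod.val_lt _⟩, ?_⟩
        simp only [hf, Sum.elim_inl]
        rw [ZMod.natCast_val, ZMod.cast_id, ← hsp]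
    · rintro ⟨i, rfl⟩
      cases i with
      | inl t =>
        refine ⟨![1, ((t : ℕ) : ZMod (ℓ ^ d))], fun h => hone ?_, by simp only [hf, Sum.elim_inl]⟩
        simpa using h.1
      | inr s =>
        refine ⟨![(ℓ : ZMod (ℓ ^ d)) * ((s : ℕ) : ZMod (ℓ ^ d)), 1], fun h => hone ?_,
          by simp only [hf, Sum.elim_inr]⟩
        simpa using h.2
  have hinj : Function.Injective f := by
    rintro (t | t) (t' | t') h <;> simp only [hf, Sum.elim_inl, Sum.elim_inr] at h
    · obtain ⟨c, hc⟩ := hspan_mem _ _ h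
      have h0 : c * 1 = 1 := congrFun hc 0
      have h1 : c * ((t' : ℕ) : ZMod (ℓ ^ d)) = ((t : ℕ) : ZMod (ℓ ^ d)) := congrFun hc 1
      rw [mul_one] at h0
      rw [h0, one_mul] at h1
      have hval : (t' : ℕ) = (t : ℕ) := by
        have := congrArg ZMod.val h1
        rwa [ZMod.val_cast_of_lt t'.2, ZMod.val_cast_of_lt t.2] at this
      exact congrArg Sum.inl (Fin.ext hval.symm)
    · obtain ⟨c, hc⟩ := hspan_mem _ _ h
      have h0 : c * ((ℓ : ZMod (ℓ ^ d)) * ((t' : ℕ) : ZMod (ℓ ^ d))) = 1 := congrFun hc 0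
      exact absurd ⟨c * ((t' : ℕ) : ZMod (ℓ ^ d)), by linear_combination -h0⟩ hone
    · obtain ⟨c, hc⟩ := hspan_mem _ _ h
      have h0 : c * 1 = (ℓ : ZMod (ℓ ^ d)) * ((t : ℕ) : ZMod (ℓ ^ d)) := congrFun hc 0
      have h1 : c * ((t' : ℕ) : ZMod (ℓ ^ d)) = 1 := congrFun hc 1
      refine absurd ⟨((t : ℕ) : ZMod (ℓ ^ d)) * ((t' : ℕ) : ZMod (ℓ ^ d)), ?_⟩ hone
      linear_combination -h1 + ((t' : ℕ) : ZMod (ℓ ^ d)) * h0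
    · obtain ⟨c, hc⟩ := hspan_mem _ _ h
      have h0 : c * ((ℓ : ZMod (ℓ ^ d)) * ((t' : ℕ) : ZMod (ℓ ^ d))) =
          (ℓ : ZMod (ℓ ^ d)) * ((t : ℕ) : ZMod (ℓ ^ d)) := congrFun hc 0
      have h1 : c * 1 = 1 := congrFun hc 1
      rw [mul_one] at h1
      rw [h1, one_mul] at h0
      have hs : ((ℓ * (t : ℕ) : ℕ) : ZMod (ℓ ^ d)) = ((ℓ * (t' : ℕ) : ℕ) : ZMod (ℓ ^ d)) := by
        push_cast
        linear_combination -h0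
      have hmod : ℓ * (t : ℕ) ≡ ℓ * (t' : ℕ) [MOD ℓ ^ d] :=
        (ZMod.natCast_eq_natCast_iff _ _ _).mp hs
      have hmod2 : (t : ℕ) ≡ (t' : ℕ) [MOD ℓ ^ (d - 1)] := by
        apply Nat.ModEq.mul_left_cancel' hℓ.pos.ne'
        have hld : ℓ * ℓ ^ (d - 1) = ℓ ^ d := by
          rw [← pow_succ', Nat.sub_add_cancel hd]
        rwa [hld]
      have hval : (t : ℕ) = (t' : ℕ) := by
        have := hmod2
        unfold Nat.ModEq at this
        rwa [Nat.mod_eq_of_lt t.2, Nat.mod_eq_of_lt t'.2] at this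
      exact congrArg Sum.inr (Fin.ext hval)
  rw [hTR]
  have h1 : (Set.range f).ncard = Nat.card (Fin (ℓ ^ d) ⊕ Fin (ℓ ^ (d - 1))) := by
    rw [← Nat.card_coe_set_eq, Nat.card_range_of_injective hinj]
  rw [h1, Nat.card_eq_fintype_card, Fintype.card_sum, Fintype.card_fin, Fintype.card_fin]
  have h2 : ℓ ^ d = ℓ ^ (d - 1) * ℓ := by
    conv_lhs => rw [← Nat.sub_add_cancel hd]
    rw [pow_succ]
  rw [h2]; ring
end

section
/- Let ℓ be an odd prime and ε ∈ ℤ/ℓ²ℤ an element whose reduction modulo ℓ is not a square in ℤ/ℓℤ. Let v ∈ (ℤ/ℓ²ℤ)² be a vector whose reduction modulo ℓ is nonzero (equivalently, v has additive order ℓ²). Then the orbit { X·v : X ∈ N(ℓ, ε) } has exactly ℓ² elements; equivalently, exactly ℓ elements of N(ℓ, ε) fix v. -/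
open Matrix

/-- The set `N(ℓ, ε) = { I + ℓ·[[a, εb],[−b, c]] : a, b, c ∈ ℤ/ℓ²ℤ }` of
matrices over `ℤ/ℓ²ℤ`. -/
def KernelPart (ℓ : ℕ) (ε : ZMod (ℓ ^ 2)) :
    Set (Matrix (Fin 2) (Fin 2) (ZMod (ℓ ^ 2))) :=
  {X | ∃ a b c : ZMod (ℓ ^ 2),
    X = 1 + (ℓ : ZMod (ℓ ^ 2)) • !![a, ε * b; -b, c]}

/-- for an odd prime `ℓ`, `ε ∈ ℤ/ℓ²ℤ` a nonsquare mod `ℓ`, and a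
vector `v ∈ (ℤ/ℓ²ℤ)²` whose reduction mod `ℓ` is nonzero, the orbit
`{X·v : X ∈ N(ℓ, ε)}` has exactly `ℓ²` elements; equivalently, exactly `ℓ`
elements of `N(ℓ, ε)` fix `v`. -/
theorem stmt12 (ℓ : ℕ) (hℓ : ℓ.Prime) (hodd : Odd ℓ)
    (ε : ZMod (ℓ ^ 2))
    (hε : ¬ IsSquare
      (ZMod.castHom (dvd_pow_self ℓ (by norm_num : (2 : ℕ) ≠ 0)) (ZMod ℓ) ε))
    (v : Fin 2 → ZMod (ℓ ^ 2))
    (hv : ¬ ((ℓ : ZMod (ℓ ^ 2)) ∣ v 0 ∧ (ℓ : ZMod (ℓ ^ 2)) ∣ v 1)) :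
    {w : Fin 2 → ZMod (ℓ ^ 2) | ∃ X ∈ KernelPart ℓ ε, w = X.mulVec v}.ncard = ℓ ^ 2 ∧
    {X ∈ KernelPart ℓ ε | X.mulVec v = v}.ncard = ℓ := by
  have hℓ1 : 1 < ℓ := hℓ.one_lt
  haveI : NeZero ℓ := ⟨hℓ.ne_zero⟩
  haveI : NeZero (ℓ ^ 2) := ⟨pow_ne_zero 2 hℓ.ne_zero⟩
  set p : ZMod (ℓ ^ 2) := (ℓ : ZMod (ℓ ^ 2)) with hp
  have hpp : p * p = 0 := by rw [hp, ← Nat.cast_mul, ← sq]; exact ZMod.natCast_self _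
  have hdvd : ∀ z : ZMod (ℓ ^ 2), p ∣ z ↔ ℓ ∣ z.val := by
    intro z
    constructor
    · rintro ⟨k, rfl⟩
      have h1 : (p * k).val = (ℓ * k.val) % ℓ ^ 2 := by
        rw [hp, ZMod.val_mul, ZMod.val_natCast]
        congr 2
        exact Nat.mod_eq_of_lt (by nlinarith)
      rw [h1]
      exact (Nat.dvd_mod_iff (dvd_pow_self ℓ two_ne_zero)).2 ⟨k.val, rfl⟩
    · rintro ⟨k, hk⟩
      refine ⟨(k : ZMod (ℓ ^ 2)), ?_⟩
      rw [← ZMod.natCast_zmod_val z, hk, Nat.cast_mul, hp]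
  have hpz : ∀ z : ZMod (ℓ ^ 2), p ∣ z → p * z = 0 := by
    rintro z ⟨k, rfl⟩; rw [← mul_assoc, hpp, zero_mul]
  have hunit : ∀ z : ZMod (ℓ ^ 2), ¬ p ∣ z → IsUnit z := by
    intro z h
    rw [hdvd] at h
    rw [← ZMod.natCast_zmod_val z, ZMod.isUnit_iff_coprime]
    exact Nat.Coprime.pow_right _ ((Nat.Prime.coprime_iff_not_dvd hℓ).2 h).symm
  set F := ZMod.castHom (dvd_pow_self ℓ (by norm_num : (2 : ℕ) ≠ 0)) (ZMod ℓ) with hF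
  have hcast : ∀ x y : ZMod (ℓ ^ 2), F x = F y → p * x = p * y := by
    intro x y h
    have h0 : F (x - y) = 0 := by rw [map_sub, h, sub_self]
    have h1 : F (x - y) = (((x - y).val : ℕ) : ZMod ℓ) := by
      conv_lhs => rw [← ZMod.natCast_zmod_val (x - y)]
      exact map_natCast F _
    have h2 : ℓ ∣ (x - y).val := by
      rwa [h1, ZMod.natCast_eq_zero_iff] at h0
    have h3 := hpz _ ((hdvd _).2 h2)
    rw [mul_sub, sub_eq_zero] at h3
    exact h3
  have hpF : ∀ z : ZMod (ℓ ^ 2), p * (((F z).val : ℕ) : ZMod (ℓ ^ 2)) = p * z := by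
    intro z
    exact hcast _ _ (by rw [map_natCast, ZMod.natCast_zmod_val])
  have hvalinj : ∀ t t' : ZMod ℓ,
      p * ((t.val : ℕ) : ZMod (ℓ ^ 2)) = p * ((t'.val : ℕ) : ZMod (ℓ ^ 2)) → t = t' := by
    intro t t' h
    have h1 : ((ℓ * t.val : ℕ) : ZMod (ℓ ^ 2)) = ((ℓ * t'.val : ℕ) : ZMod (ℓ ^ 2)) := by
      push_cast; rw [← hp]; exact h
    have h2 := congrArg ZMod.val h1
    rw [ZMod.val_cast_of_lt (by nlinarith [ZMod.val_lt t]),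
      ZMod.val_cast_of_lt (by nlinarith [ZMod.val_lt t'])] at h2
    have h3 : t.val = t'.val := Nat.eq_of_mul_eq_mul_left hℓ.pos h2
    rw [← ZMod.natCast_zmod_val t, ← ZMod.natCast_zmod_val t', h3]
  have hεu : IsUnit ε := by
    apply hunit
    intro hd
    apply hε
    obtain ⟨k, hk⟩ := hd
    refine ⟨0, ?_⟩
    have hFp : F p = 0 := by
      rw [hp, map_natCast, ZMod.natCast_self]
    rw [hk, _root_.map_mul, hFp, zero_mul, mul_zero]
  have hmv : ∀ a b c : ZMod (ℓ ^ 2),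
      (1 + p • !![a, ε * b; -b, c]).mulVec v =
      ![v 0 + p * (a * v 0 + ε * b * v 1), v 1 + p * (-b * v 0 + c * v 1)] := by
    intro a b c
    funext i
    fin_cases i <;>
      simp [Matrix.mulVec, dotProduct, Fin.sum_univ_two, Matrix.one_apply,
        Matrix.add_apply, Matrix.smul_apply, smul_eq_mul] <;> ring
  have hvv : ![v 0, v 1] = v := by funext i; fin_cases i <;> simp
  -- the orbit
  have horb : {w : Fin 2 → ZMod (ℓ ^ 2) | ∃ X ∈ KernelPart ℓ ε, w = X.mulVec v}.ncard
      = ℓ ^ 2 := by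
    set f : ZMod ℓ × ZMod ℓ → (Fin 2 → ZMod (ℓ ^ 2)) := fun st =>
      ![v 0 + p * ((st.1.val : ℕ) : ZMod (ℓ ^ 2)), v 1 + p * ((st.2.val : ℕ) : ZMod (ℓ ^ 2))]
      with hf
    have hfinj : Function.Injective f := by
      rintro ⟨x, y⟩ ⟨x', y'⟩ h
      have h0 := congrFun h 0
      have h1 := congrFun h 1
      simp only [hf, Matrix.cons_val_zero, Matrix.cons_val_one, Matrix.head_cons] at h0 h1
      have e0 := add_left_cancel h0
      have e1 := add_left_cancel h1
      exact Prod.ext (hvalinj _ _ e0) (hvalinj _ _ e1)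
    have hset : {w : Fin 2 → ZMod (ℓ ^ 2) | ∃ X ∈ KernelPart ℓ ε, w = X.mulVec v}
        = f '' Set.univ := by
      rw [Set.image_univ]
      ext w
      simp only [Set.mem_setOf_eq, Set.mem_range]
      constructor
      · rintro ⟨X, ⟨a, b, c, rfl⟩, rfl⟩
        refine ⟨(F (a * v 0 + ε * b * v 1), F (-b * v 0 + c * v 1)), ?_⟩
        rw [hf, hmv]
        simp only
        rw [hpF, hpF]
      · rintro ⟨⟨x, y⟩, rfl⟩
        set X : ZMod (ℓ ^ 2) := ((x.val : ℕ) : ZMod (ℓ ^ 2)) with hX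
        set Y : ZMod (ℓ ^ 2) := ((y.val : ℕ) : ZMod (ℓ ^ 2)) with hY
        by_cases h0 : p ∣ v 0
        · -- v 1 is a unit
          have h1 : ¬ p ∣ v 1 := fun h' => hv ⟨h0, h'⟩
          obtain ⟨u, hu⟩ := (hunit _ h1).exists_left_inv
          obtain ⟨e, he⟩ := hεu.exists_left_inv
          have k1 : (0 : ZMod (ℓ ^ 2)) * v 0 + ε * (e * u * X) * v 1 = X := by
            rw [show (0 : ZMod (ℓ ^ 2)) * v 0 + ε * (e * u * X) * v 1
              = (e * ε) * ((u * v 1) * X) from by ring, he, hu]; ring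
          have k2 : -(e * u * X) * v 0 + (u * (Y + (e * u * X) * v 0)) * v 1 = Y := by
            rw [show -(e * u * X) * v 0 + (u * (Y + (e * u * X) * v 0)) * v 1
              = (u * v 1) * (Y + (e * u * X) * v 0) - (e * u * X) * v 0 from by ring, hu]
            ring
          refine ⟨1 + p • !![0, ε * (e * u * X); -(e * u * X), u * (Y + (e * u * X) * v 0)],
            ⟨0, e * u * X, u * (Y + (e * u * X) * v 0), rfl⟩, ?_⟩
          rw [hmv, k1, k2]
        · obtain ⟨u, hu⟩ := (hunit _ h0).exists_left_inv
          have k1 : ((X - ε * (-(Y * u)) * v 1) * u) * v 0 + ε * (-(Y * u)) * v 1 = X := by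
            rw [show ((X - ε * (-(Y * u)) * v 1) * u) * v 0 + ε * (-(Y * u)) * v 1
              = (u * v 0) * (X - ε * (-(Y * u)) * v 1) + ε * (-(Y * u)) * v 1 from by ring, hu]
            ring
          have k2 : -(-(Y * u)) * v 0 + (0 : ZMod (ℓ ^ 2)) * v 1 = Y := by
            rw [show -(-(Y * u)) * v 0 + (0 : ZMod (ℓ ^ 2)) * v 1 = (u * v 0) * Y from by ring,
              hu]
            ring
          refine ⟨1 + p • !![(X - ε * (-(Y * u)) * v 1) * u, ε * (-(Y * u)); -(-(Y * u)), 0],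
            ⟨(X - ε * (-(Y * u)) * v 1) * u, -(Y * u), 0, rfl⟩, ?_⟩
          rw [hmv, k1, k2]
    rw [hset, Set.ncard_image_of_injective _ hfinj, Set.ncard_univ, Nat.card_prod,
      Nat.card_zmod, sq]
  refine ⟨horb, ?_⟩
  -- the stabilizer
  by_cases h0 : p ∣ v 0
  · -- v 1 is a unit, p * v 0 = 0
    have h1 : ¬ p ∣ v 1 := fun h' => hv ⟨h0, h'⟩
    obtain ⟨u, hu⟩ := (hunit _ h1).exists_left_inv
    obtain ⟨e, he⟩ := hεu.exists_left_inv
    have hp0 : p * v 0 = 0 := hpz _ h0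
    set g : ZMod ℓ → Matrix (Fin 2) (Fin 2) (ZMod (ℓ ^ 2)) := fun t =>
      1 + p • !![((t.val : ℕ) : ZMod (ℓ ^ 2)), ε * 0; -0, 0] with hg
    have hginj : Function.Injective g := by
      intro t t' h
      have h00 := congrFun (congrFun h 0) 0
      simp only [hg, Matrix.add_apply, Matrix.smul_apply, smul_eq_mul, Matrix.one_apply_eq,
        Matrix.cons_val', Matrix.cons_val_zero, Matrix.empty_val', Matrix.cons_val_fin_one,
        Matrix.cons_val_one, Matrix.head_cons, Matrix.head_fin_const] at h00
      exact hvalinj _ _ (add_left_cancel h00)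
    have hset : {X ∈ KernelPart ℓ ε | X.mulVec v = v} = g '' Set.univ := by
      rw [Set.image_univ]
      ext M
      simp only [Set.mem_setOf_eq, Set.mem_range]
      constructor
      · rintro ⟨⟨a, b, c, rfl⟩, hfix⟩
        rw [hmv] at hfix
        have e0 := congrFun hfix 0
        have e1 := congrFun hfix 1
        simp only [Matrix.cons_val_zero, Matrix.cons_val_one, Matrix.head_cons] at e0 e1
        have hE1 : p * (a * v 0 + ε * b * v 1) = 0 := by linear_combination e0
        have hE2 : p * (-b * v 0 + c * v 1) = 0 := by linear_combination e1
        have h2 : p * (ε * b * v 1) = 0 := by linear_combination hE1 - a * hp0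
        have hpb : p * b = 0 := by
          calc p * b = (e * ε) * ((u * v 1) * (p * b)) := by rw [he, hu]; ring
            _ = (e * u) * (p * (ε * b * v 1)) := by ring
            _ = 0 := by rw [h2, mul_zero]
        have h3 : p * (c * v 1) = 0 := by linear_combination hE2 + v 0 * hpb
        have hpc : p * c = 0 := by
          calc p * c = (u * v 1) * (p * c) := by rw [hu]; ring
            _ = u * (p * (c * v 1)) := by ring
            _ = 0 := by rw [h3, mul_zero]
        refine ⟨F a, ?_⟩
        have hTa : p * ((F a).cast : ZMod (ℓ ^ 2)) = p * a := by
          rw [← ZMod.natCast_val]; exact hpF a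
        ext i j
        fin_cases i <;> fin_cases j <;>
          simp [hg, Matrix.add_apply, Matrix.smul_apply, smul_eq_mul, Matrix.one_apply] <;>
          rw [← hp]
        · linear_combination hTa
        · linear_combination (-ε) * hpb
        · linear_combination hpb
        · linear_combination hpc
      · rintro ⟨t, rfl⟩
        constructor
        · exact ⟨((t.val : ℕ) : ZMod (ℓ ^ 2)), 0, 0, rfl⟩
        · rw [hmv]
          rw [show ((t.val : ℕ) : ZMod (ℓ ^ 2)) * v 0 + ε * 0 * v 1
            = ((t.val : ℕ) : ZMod (ℓ ^ 2)) * v 0 from by ring]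
          rw [show p * (((t.val : ℕ) : ZMod (ℓ ^ 2)) * v 0)
            = ((t.val : ℕ) : ZMod (ℓ ^ 2)) * (p * v 0) from by ring, hp0]
          rw [show (-0 : ZMod (ℓ ^ 2)) * v 0 + 0 * v 1 = 0 from by ring]
          simpa using hvv
    rw [hset, Set.ncard_image_of_injective _ hginj, Set.ncard_univ, Nat.card_zmod]
  · -- v 0 is a unit
    obtain ⟨u, hu⟩ := (hunit _ h0).exists_left_inv
    set g : ZMod ℓ → Matrix (Fin 2) (Fin 2) (ZMod (ℓ ^ 2)) := fun t =>
      1 + p • !![-(ε * (((t.val : ℕ) : ZMod (ℓ ^ 2)) * v 1 * u) * v 1 * u),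
        ε * (((t.val : ℕ) : ZMod (ℓ ^ 2)) * v 1 * u);
        -(((t.val : ℕ) : ZMod (ℓ ^ 2)) * v 1 * u), ((t.val : ℕ) : ZMod (ℓ ^ 2))] with hg
    have hginj : Function.Injective g := by
      intro t t' h
      have h11 := congrFun (congrFun h 1) 1
      simp only [hg, Matrix.add_apply, Matrix.smul_apply, smul_eq_mul, Matrix.one_apply_eq,
        Matrix.cons_val', Matrix.cons_val_zero, Matrix.empty_val', Matrix.cons_val_fin_one,
        Matrix.cons_val_one, Matrix.head_cons, Matrix.head_fin_const] at h11
      exact hvalinj _ _ (add_left_cancel h11)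
    have hset : {X ∈ KernelPart ℓ ε | X.mulVec v = v} = g '' Set.univ := by
      rw [Set.image_univ]
      ext M
      simp only [Set.mem_setOf_eq, Set.mem_range]
      constructor
      · rintro ⟨⟨a, b, c, rfl⟩, hfix⟩
        rw [hmv] at hfix
        have e0 := congrFun hfix 0
        have e1 := congrFun hfix 1
        simp only [Matrix.cons_val_zero, Matrix.cons_val_one, Matrix.head_cons] at e0 e1
        have hE1 : p * (a * v 0 + ε * b * v 1) = 0 := by linear_combination e0
        have hE2 : p * (-b * v 0 + c * v 1) = 0 := by linear_combination e1
        have hTc := hpF c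
        have hpb : p * b = p * c * v 1 * u := by
          linear_combination (-(p * b)) * hu + (-u) * hE2
        have hpa : p * a = -(ε * (p * c * v 1 * u) * v 1 * u) := by
          linear_combination (-(ε * v 1 * u)) * hpb + u * hE1 + (-(p * a)) * hu
        refine ⟨F c, ?_⟩
        have hTc' : p * ((F c).cast : ZMod (ℓ ^ 2)) = p * c := by
          rw [← ZMod.natCast_val]; exact hpF c
        ext i j
        fin_cases i <;> fin_cases j <;>
          simp [hg, Matrix.add_apply, Matrix.smul_apply, smul_eq_mul, Matrix.one_apply] <;>
          rw [← hp]
        · linear_combination (-(ε * v 1 * u * v 1 * u)) * hTc' - hpa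
        · linear_combination (ε * v 1 * u) * hTc' - ε * hpb
        · linear_combination (v 1 * u) * hTc' - hpb
        · linear_combination hTc'
      · rintro ⟨t, rfl⟩
        constructor
        · exact ⟨_, _, _, rfl⟩
        · rw [hmv]
          have z1 : -(ε * (((t.val : ℕ) : ZMod (ℓ ^ 2)) * v 1 * u) * v 1 * u) * v 0
              + ε * (((t.val : ℕ) : ZMod (ℓ ^ 2)) * v 1 * u) * v 1 = 0 := by
            linear_combination (-(ε * (((t.val : ℕ) : ZMod (ℓ ^ 2)) * v 1 * u) * v 1)) * hu
          have z2 : -(((t.val : ℕ) : ZMod (ℓ ^ 2)) * v 1 * u) * v 0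
              + ((t.val : ℕ) : ZMod (ℓ ^ 2)) * v 1 = 0 := by
            linear_combination (-(((t.val : ℕ) : ZMod (ℓ ^ 2)) * v 1)) * hu
          rw [z1, z2, mul_zero, add_zero, add_zero]
          exact hvv
    rw [hset, Set.ncard_image_of_injective _ hginj, Set.ncard_univ, Nat.card_zmod]
end

section
/- Let ℓ be an odd prime and ε ∈ ℤ/ℓ²ℤ an element whose reduction modulo ℓ is not a square in ℤ/ℓℤ. Then the subgroup N(ℓ, ε) ≤ GL₂(ℤ/ℓ²ℤ) is normalized both by every matrix M = [[a, εb],[b, a]] ∈ GL₂(ℤ/ℓ²ℤ) with a, b ∈ ℤ/ℓ²ℤ not both divisible by ℓ, and by w = [[1, 0],[0, −1]]: that is, M·X·M⁻¹ ∈ N(ℓ, ε) and w·X·w⁻¹ ∈ N(ℓ, ε) for all X ∈ N(ℓ, ε). -/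
open Matrix

section Aux
variable (ℓ : ℕ) [hp : Fact ℓ.Prime]

lemma aux_castHom_eq_zero_iff (x : ZMod (ℓ ^ 2)) :
    (ZMod.castHom (dvd_pow_self ℓ (by norm_num : (2:ℕ) ≠ 0)) (ZMod ℓ)) x = 0 ↔
      (ℓ : ZMod (ℓ ^ 2)) ∣ x := by
  haveI : NeZero (ℓ ^ 2) := ⟨pow_ne_zero 2 hp.out.ne_zero⟩
  rw [ZMod.castHom_apply, ← ZMod.natCast_val, ZMod.natCast_eq_zero_iff]
  constructor
  · rintro ⟨k, hk⟩
    exact ⟨(k : ZMod (ℓ ^ 2)), by rw [← ZMod.natCast_zmod_val x, hk]; push_cast; ring⟩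
  · rintro ⟨y, rfl⟩
    have : ((ℓ : ZMod (ℓ ^ 2)) * y).val = (ℓ * y.val) % (ℓ ^ 2) := by
      rw [ZMod.val_mul, ZMod.val_natCast_of_lt]
      nlinarith [hp.out.two_le, ZMod.val_lt y]
    rw [this]
    exact Nat.dvd_mod_iff (dvd_pow_self ℓ two_ne_zero) |>.mpr ⟨y.val, rfl⟩

lemma aux_isUnit (x : ZMod (ℓ ^ 2))
    (hx : (ZMod.castHom (dvd_pow_self ℓ (by norm_num : (2:ℕ) ≠ 0)) (ZMod ℓ)) x ≠ 0) :
    IsUnit x := by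
  haveI : NeZero (ℓ ^ 2) := ⟨pow_ne_zero 2 hp.out.ne_zero⟩
  rw [ZMod.castHom_apply, ← ZMod.natCast_val, ne_eq,
    ZMod.natCast_eq_zero_iff] at hx
  rw [← ZMod.natCast_zmod_val x, ZMod.isUnit_iff_coprime,
    Nat.coprime_pow_right_iff (by norm_num)]
  exact Nat.coprime_comm.mp ((Nat.Prime.coprime_iff_not_dvd hp.out).mpr hx)

end Aux

/-- for an odd prime `ℓ` and `ε ∈ ℤ/ℓ²ℤ` a nonsquare mod `ℓ`, the
subgroup `N(ℓ, ε)` is normalized by every Cartan matrix `M = [[a, εb],[b, a]]`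
with `a, b` not both divisible by `ℓ`, and by `w = [[1, 0],[0, −1]]`:
`M·X·M⁻¹ ∈ N(ℓ, ε)` and `w·X·w⁻¹ ∈ N(ℓ, ε)` for all `X ∈ N(ℓ, ε)`. -/
theorem stmt13 (ℓ : ℕ) (hℓ : ℓ.Prime) (hodd : Odd ℓ)
    (ε : ZMod (ℓ ^ 2))
    (hε : ¬ IsSquare
      (ZMod.castHom (dvd_pow_self ℓ (by norm_num : (2 : ℕ) ≠ 0)) (ZMod ℓ) ε))
    (a b : ZMod (ℓ ^ 2))
    (hab : ¬ ((ℓ : ZMod (ℓ ^ 2)) ∣ a ∧ (ℓ : ZMod (ℓ ^ 2)) ∣ b)) :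
    ∀ X ∈ KernelPart ℓ ε,
      !![a, ε * b; b, a] * X * (!![a, ε * b; b, a])⁻¹ ∈ KernelPart ℓ ε ∧
      !![(1 : ZMod (ℓ ^ 2)), 0; 0, -1] * X * (!![(1 : ZMod (ℓ ^ 2)), 0; 0, -1])⁻¹ ∈
        KernelPart ℓ ε := by
  haveI : Fact ℓ.Prime := ⟨hℓ⟩
  set f := ZMod.castHom (dvd_pow_self ℓ (by norm_num : (2:ℕ) ≠ 0)) (ZMod ℓ) with hf
  rintro X ⟨p, q, r, rfl⟩
  set M : Matrix (Fin 2) (Fin 2) (ZMod (ℓ ^ 2)) := !![a, ε * b; b, a] with hM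
  set N : Matrix (Fin 2) (Fin 2) (ZMod (ℓ ^ 2)) := !![p, ε * q; -q, r] with hN
  constructor
  · -- Cartan matrix case
    have hd : IsUnit M.det := by
      apply aux_isUnit ℓ
      rw [hM, det_fin_two_of]
      intro h0
      simp only [map_sub, _root_.map_mul] at h0
      by_cases hb : f b = 0
      · have ha : f a = 0 := by
          have : f a * f a = 0 := by rw [← h0]; rw [hb]; ring
          rcases mul_eq_zero.mp this with h | h <;> exact h
        exact hab ⟨(aux_castHom_eq_zero_iff ℓ a).mp ha,
          (aux_castHom_eq_zero_iff ℓ b).mp hb⟩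
      · apply hε
        refine ⟨f a * (f b)⁻¹, ?_⟩
        field_simp
        change f a * f a - f ε * f b * f b = 0 at h0
        linear_combination -h0
    haveI := M.invertibleOfIsUnitDet hd
    set e : ZMod (ℓ ^ 2) := ↑hd.unit⁻¹ with he
    have hed : e * M.det = 1 := by
      rw [he]; exact_mod_cast hd.unit.inv_mul
    set a' : ZMod (ℓ ^ 2) := e * (a*a*p - 2*ε*a*b*q - ε*b*b*r) with ha'
    set b' : ZMod (ℓ ^ 2) := e * (a*a*q + ε*b*b*q - a*b*p + a*b*r) with hb'
    set c' : ZMod (ℓ ^ 2) := e * (a*a*r + 2*ε*a*b*q - ε*b*b*p) with hc'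
    have hS : !![a', ε * b'; -b', c'] = e • (M * N * adjugate M) := by
      ext i j
      fin_cases i <;> fin_cases j <;>
        simp [hM, hN, ha', hb', hc', adjugate_fin_two, Matrix.mul_apply,
          Fin.sum_univ_succ] <;> ring
    have h2 : (e • (M * N * adjugate M)) * M = M * N := by
      rw [smul_mul_assoc, mul_assoc, adjugate_mul, Matrix.mul_smul, mul_one,
        smul_smul, mul_comm e, mul_comm M.det e, hed, one_smul]
    refine ⟨a', b', c', ?_⟩
    rw [Matrix.mul_inv_eq_iff_eq_mul_of_invertible]
    rw [hS, mul_add, mul_one, add_mul, one_mul, smul_mul_assoc, h2, mul_smul_comm]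
  · -- w case
    have hw : (!![(1 : ZMod (ℓ ^ 2)), 0; 0, -1])⁻¹ = !![(1 : ZMod (ℓ ^ 2)), 0; 0, -1] := by
      apply inv_eq_right_inv
      ext i j
      fin_cases i <;> fin_cases j <;>
        simp [Matrix.mul_apply, Fin.sum_univ_succ]
    refine ⟨p, -q, r, ?_⟩
    rw [hw]
    ext i j
    fin_cases i <;> fin_cases j <;>
      simp [hN, Matrix.mul_apply, Matrix.vecMul, dotProduct,
        Fin.sum_univ_succ, Matrix.one_apply, Matrix.add_apply] <;> ring
end

section
/- Let H be the subgroup of GL₂(ℤ/49ℤ) generated by the six matrices [[1,0],[37,48]], [[20,4],[18,21]], [[31,17],[3,23]], [[22,0],[0,22]], [[34,26],[19,16]], [[33,26],[19,15]]. Let C_s⁺(49) be the subgroup of GL₂(ℤ/49ℤ) consisting of all invertible matrices that are diagonal or antidiagonal. Then there exists g ∈ GL₂(ℤ/49ℤ) such that g·H·g⁻¹ is a subgroup of C_s⁺(49) of index 7. -/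
open Matrix

open scoped MatrixGroups

/-- The six generating matrices over `ℤ/49ℤ`. -/
def genMatrices : Set (Matrix (Fin 2) (Fin 2) (ZMod 49)) :=
  {!![1, 0; 37, 48], !![20, 4; 18, 21], !![31, 17; 3, 23],
   !![22, 0; 0, 22], !![34, 26; 19, 16], !![33, 26; 19, 15]}

/-- The subgroup `H ≤ GL₂(ℤ/49ℤ)` generated by the six matrices. -/
def Hsub : Subgroup (GL (Fin 2) (ZMod 49)) :=
  Subgroup.closure {g : GL (Fin 2) (ZMod 49) |
    (g : Matrix (Fin 2) (Fin 2) (ZMod 49)) ∈ genMatrices}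

/-- An element of `GL₂(ℤ/49ℤ)` is diagonal or antidiagonal. -/
def IsDiagOrAntidiag (g : GL (Fin 2) (ZMod 49)) : Prop :=
  ((g : Matrix (Fin 2) (Fin 2) (ZMod 49)) 0 1 = 0 ∧
    (g : Matrix (Fin 2) (Fin 2) (ZMod 49)) 1 0 = 0) ∨
  ((g : Matrix (Fin 2) (Fin 2) (ZMod 49)) 0 0 = 0 ∧
    (g : Matrix (Fin 2) (Fin 2) (ZMod 49)) 1 1 = 0)

/-- `C_s⁺(49)`: the normalizer of the split Cartan, i.e. the subgroup of all
invertible diagonal or antidiagonal matrices over `ℤ/49ℤ`. -/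
def CsPlus49 : Subgroup (GL (Fin 2) (ZMod 49)) :=
  Subgroup.closure {g | IsDiagOrAntidiag g}

/-!
Conjugation by `g = !![44, 24; 1, 25]` sends the first generator of `H` to the swap
`w = !![0, 1; 1, 0]` and the other five to diagonal matrices `diag(a, d)` with `a⁶ = d⁶`.
The group they generate contains the scalar `5`, a primitive root mod `49`, and
`diag(19, 1)`, with `19` of order `6`; together with `w` these generate the whole subgroup
`K ≤ C_s⁺(49)` of matrices whose two nonzero entries have equal sixth powers. Hence
`g H g⁻¹ = K`.

Since `w ∈ K`, the diagonal subgroup `D` has index `2` both in `K` and in `C_s⁺(49)`, so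
`[C_s⁺(49) : K] = [D : K ∩ D]`. Identifying `D` with `(ℤ/49ℤ)ˣ²`, `K ∩ D` is the kernel of
`(a, d) ↦ (a / d)⁶`, so the index is the number of sixth powers in the cyclic group
`(ℤ/49ℤ)ˣ` of order `42`, namely `7`.
-/

theorem Subgroup.relIndex_eq_relIndex_of_relIndex_eq {G : Type*} [Group G] {H D L : Subgroup G}
    (hHL : H ≤ L) (hDL : D ≤ L) (h : D.relIndex H = D.relIndex L) (h0 : D.relIndex L ≠ 0) :
    H.relIndex L = H.relIndex D := by
  have key := relIndex_inf_mul_relIndex H D L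
  rw [inf_of_le_left hDL, ← relIndex_mul_relIndex _ _ _ inf_le_left hHL, inf_relIndex_left, h,
    mul_comm] at key
  exact (Nat.eq_of_mul_eq_mul_left (Nat.pos_of_ne_zero h0) key).symm

namespace SplitCartan

variable (R : Type*) [CommRing R]

local notation "M₂" => Matrix (Fin 2) (Fin 2) R

def diagUnits : (Fin 2 → Rˣ) →* GL (Fin 2) R :=
  (Units.map (diagonalRingHom (Fin 2) R : (Fin 2 → R) →* M₂)).comp
    MulEquiv.piUnits.symm.toMonoidHom

def swapUnit : GL (Fin 2) R :=
  ⟨!![0, 1; 1, 0], !![0, 1; 1, 0], by simp [one_fin_two], by simp [one_fin_two]⟩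

def splitCartanNormalizer : Subgroup (GL (Fin 2) R) where
  carrier := {g | ((g : M₂) 0 1 = 0 ∧ (g : M₂) 1 0 = 0) ∨ ((g : M₂) 0 0 = 0 ∧ (g : M₂) 1 1 = 0)}
  one_mem' := by simp
  mul_mem' := by
    rintro a b (⟨ha, ha'⟩ | ⟨ha, ha'⟩) (⟨hb, hb'⟩ | ⟨hb, hb'⟩) <;>
      simp [mul_apply, Fin.sum_univ_two, *]
  inv_mem' := by
    rintro g (⟨h, h'⟩ | ⟨h, h'⟩) <;> simp [coe_units_inv, inv_def, adjugate_fin_two, *]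

def ratioPowSubgroup (n : ℕ) : Subgroup (GL (Fin 2) R) where
  carrier := {g | ((g : M₂) 0 1 = 0 ∧ (g : M₂) 1 0 = 0 ∧ (g : M₂) 0 0 ^ n = (g : M₂) 1 1 ^ n) ∨
    ((g : M₂) 0 0 = 0 ∧ (g : M₂) 1 1 = 0 ∧ (g : M₂) 0 1 ^ n = (g : M₂) 1 0 ^ n)}
  one_mem' := by simp
  mul_mem' := by
    rintro a b (⟨ha, ha', ha''⟩ | ⟨ha, ha', ha''⟩) (⟨hb, hb', hb''⟩ | ⟨hb, hb', hb''⟩) <;>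
      simp [mul_apply, Fin.sum_univ_two, mul_pow, *]
  inv_mem' := by
    rintro g (⟨h, h', h''⟩ | ⟨h, h', h''⟩)
    · simp [coe_units_inv, inv_def, adjugate_fin_two, mul_pow, *]
    · refine Or.inr ⟨?_, ?_, ?_⟩ <;> simp only [coe_units_inv, inv_def, adjugate_fin_two] <;>
        simp [*]
      rw [neg_pow, neg_pow (_ * _), mul_pow, mul_pow, h'']

variable {R}

@[simp]
lemma coe_diagUnits (u : Fin 2 → Rˣ) : (diagUnits R u : M₂) = diagonal fun i ↦ (u i : R) := rfl

@[simp]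
lemma coe_swapUnit : (swapUnit R : M₂) = !![0, 1; 1, 0] := rfl

lemma mem_ratioPowSubgroup {n : ℕ} {g : GL (Fin 2) R} :
    g ∈ ratioPowSubgroup R n ↔
      ((g : M₂) 0 1 = 0 ∧ (g : M₂) 1 0 = 0 ∧ (g : M₂) 0 0 ^ n = (g : M₂) 1 1 ^ n) ∨
      ((g : M₂) 0 0 = 0 ∧ (g : M₂) 1 1 = 0 ∧ (g : M₂) 0 1 ^ n = (g : M₂) 1 0 ^ n) :=
  Iff.rfl

lemma ratioPowSubgroup_le_splitCartanNormalizer (n : ℕ) :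
    ratioPowSubgroup R n ≤ splitCartanNormalizer R := by
  rintro g (⟨h01, h10, -⟩ | ⟨h00, h11, -⟩)
  exacts [Or.inl ⟨h01, h10⟩, Or.inr ⟨h00, h11⟩]

lemma swapUnit_mem_ratioPowSubgroup (n : ℕ) : swapUnit R ∈ ratioPowSubgroup R n :=
  Or.inr ⟨by simp, by simp, by simp⟩

lemma isUnit_diag_entries_of_apply_zero_one {g : GL (Fin 2) R} (h01 : (g : M₂) 0 1 = 0) :
    IsUnit ((g : M₂) 0 0) ∧ IsUnit ((g : M₂) 1 1) := by
  have hdet := (isUnit_iff_isUnit_det _).mp g.isUnit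
  rwa [det_fin_two, h01, zero_mul, sub_zero, IsUnit.mul_iff] at hdet

lemma isUnit_antidiag_entries_of_apply_zero_zero {g : GL (Fin 2) R} (h00 : (g : M₂) 0 0 = 0) :
    IsUnit ((g : M₂) 0 1) ∧ IsUnit ((g : M₂) 1 0) := by
  have hdet := (isUnit_iff_isUnit_det _).mp g.isUnit
  rwa [det_fin_two, h00, zero_mul, zero_sub, IsUnit.neg_iff, IsUnit.mul_iff] at hdet

lemma mem_range_diagUnits {g : GL (Fin 2) R} :
    g ∈ (diagUnits R).range ↔ (g : M₂) 0 1 = 0 ∧ (g : M₂) 1 0 = 0 := by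
  constructor
  · rintro ⟨u, rfl⟩
    simp
  · rintro ⟨h01, h10⟩
    obtain ⟨hu0, hu1⟩ := isUnit_diag_entries_of_apply_zero_one h01
    refine ⟨![hu0.unit, hu1.unit], Units.ext ?_⟩
    ext i j
    fin_cases i <;> fin_cases j <;> simp [h01, h10]

lemma range_diagUnits_le_splitCartanNormalizer :
    (diagUnits R).range ≤ splitCartanNormalizer R :=
  fun _ hg ↦ Or.inl (mem_range_diagUnits.mp hg)

lemma relIndex_range_diagUnits [Nontrivial R] {L : Subgroup (GL (Fin 2) R)}
    (hL : L ≤ splitCartanNormalizer R) (hswap : swapUnit R ∈ L) :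
    (diagUnits R).range.relIndex L = 2 := by
  refine Subgroup.relIndex_eq_two_iff.mpr ⟨swapUnit R, hswap, fun b hb ↦ ?_⟩
  simp only [mem_range_diagUnits, Units.val_mul, coe_swapUnit, mul_apply, Fin.sum_univ_two]
  rcases hL hb with ⟨h01, h10⟩ | ⟨h00, h11⟩
  · obtain ⟨hu0, hu1⟩ := isUnit_diag_entries_of_apply_zero_one h01
    simp [h01, h10, hu0.ne_zero, hu1.ne_zero]
  · obtain ⟨hu0, hu1⟩ := isUnit_antidiag_entries_of_apply_zero_zero h00
    simp [h00, h11, hu0.ne_zero, hu1.ne_zero]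

lemma comap_diagUnits_ratioPowSubgroup [Nontrivial R] (n : ℕ) :
    (ratioPowSubgroup R n).comap (diagUnits R) =
      ((powMonoidHom n).comp
        (Pi.evalMonoidHom (fun _ : Fin 2 ↦ Rˣ) 0 / Pi.evalMonoidHom _ 1)).ker := by
  ext u
  simp [mem_ratioPowSubgroup, div_eq_one, Units.ext_iff]

lemma relIndex_ratioPowSubgroup_range_diagUnits [Nontrivial R] (n : ℕ) :
    (ratioPowSubgroup R n).relIndex (diagUnits R).range =
      Nat.card (powMonoidHom n : Rˣ →* Rˣ).range := by
  rw [MonoidHom.range_eq_map, ← Subgroup.relIndex_comap, Subgroup.relIndex_top_right,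
    comap_diagUnits_ratioPowSubgroup, Subgroup.index_ker, MonoidHom.range_comp,
    MonoidHom.range_eq_top.mpr fun t ↦ ⟨![t, 1], by simp⟩, ← MonoidHom.range_eq_map]

theorem relIndex_ratioPowSubgroup [Nontrivial R] (n : ℕ) :
    (ratioPowSubgroup R n).relIndex (splitCartanNormalizer R) =
      Nat.card (powMonoidHom n : Rˣ →* Rˣ).range := by
  have hK := ratioPowSubgroup_le_splitCartanNormalizer (R := R) n
  have hswap := swapUnit_mem_ratioPowSubgroup (R := R) n
  have hDK := relIndex_range_diagUnits hK hswap
  have hDC := relIndex_range_diagUnits le_rfl (hK hswap)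
  rw [Subgroup.relIndex_eq_relIndex_of_relIndex_eq hK range_diagUnits_le_splitCartanNormalizer
    (hDK.trans hDC.symm) (by rw [hDC]; norm_num), relIndex_ratioPowSubgroup_range_diagUnits]

lemma ratioPowSubgroup_le_of_mem [Nontrivial R] {n : ℕ} {M : Subgroup (GL (Fin 2) R)}
    (hscalar : ∀ t : Rˣ, diagUnits R (fun _ ↦ t) ∈ M)
    (hroot : ∀ s : Rˣ, s ^ n = 1 → diagUnits R (Pi.mulSingle 0 s) ∈ M)
    (hswap : swapUnit R ∈ M) :
    ratioPowSubgroup R n ≤ M := by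
  have hdiag : ∀ g ∈ ratioPowSubgroup R n, (g : M₂) 0 1 = 0 → (g : M₂) 1 0 = 0 → g ∈ M := by
    intro g hg h01 h10
    obtain ⟨u, rfl⟩ := mem_range_diagUnits.mpr ⟨h01, h10⟩
    have hu : (u 0 / u 1) ^ n = 1 := (comap_diagUnits_ratioPowSubgroup n).le hg
    have hsplit : u = (fun _ ↦ u 1) * Pi.mulSingle 0 (u 0 / u 1) := by
      ext i
      fin_cases i <;> simp
    rw [hsplit, map_mul]
    exact mul_mem (hscalar _) (hroot _ hu)
  intro g hg
  rcases mem_ratioPowSubgroup.mp hg with ⟨h01, h10, -⟩ | ⟨h00, h11, -⟩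
  · exact hdiag g hg h01 h10
  · have hgw := hdiag _ (mul_mem hg (swapUnit_mem_ratioPowSubgroup n))
      (by simp [mul_apply, h00]) (by simp [mul_apply, h11])
    simpa using mul_mem hgw (inv_mem hswap)

end SplitCartan

namespace Level49

open SplitCartan

instance : Fact (1 < 49) := ⟨by norm_num⟩

instance : IsCyclic (ZMod 49)ˣ :=
  ZMod.isCyclic_units_of_prime_pow 7 (by norm_num) (by norm_num) 2

abbrev unit49 (a : ℕ) (ha : a.Coprime 49 := by norm_num) : (ZMod 49)ˣ := ZMod.unitOfCoprime a ha

lemma card_range_powMonoidHom_six :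
    Nat.card (powMonoidHom 6 : (ZMod 49)ˣ →* (ZMod 49)ˣ).range = 7 := by
  rw [IsCyclic.card_powMonoidHom_range, Nat.card_eq_fintype_card, ZMod.card_units_eq_totient]
  decide

lemma zpowers_five : Subgroup.zpowers (unit49 5) = ⊤ := by
  apply Subgroup.eq_top_of_card_eq
  rw [Nat.card_zpowers, Nat.card_eq_fintype_card, ZMod.card_units_eq_totient,
    orderOf_eq_iff (by norm_num)]
  decide

lemma zpowers_nineteen : Subgroup.zpowers (unit49 19) = (powMonoidHom 6).ker := by
  refine Subgroup.eq_of_le_of_card_ge (Subgroup.zpowers_le.mpr (by decide)) ?_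
  have horder : orderOf (unit49 19) = 6 := (orderOf_eq_iff (by norm_num)).mpr (by decide)
  rw [IsCyclic.card_powMonoidHom_ker, Nat.card_zpowers, horder, Nat.card_eq_fintype_card,
    ZMod.card_units_eq_totient]
  decide

local notation "M₄₉" => Matrix (Fin 2) (Fin 2) (ZMod 49)

/-- Chosen so that conjugation sends `!![1, 0; 37, 48]` to `swapUnit` and the other five
generators to diagonal matrices. -/
def conjugator : GL (Fin 2) (ZMod 49) :=
  ⟨!![44, 24; 1, 25], !![12, 12; 25, 27], by decide, by decide⟩

local notation "conjHsub" => Subgroup.map (MulEquiv.toMonoidHom (MulAut.conj conjugator)) Hsub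

lemma map_conj_Hsub_le : conjHsub ≤ ratioPowSubgroup (ZMod 49) 6 := by
  rw [Hsub, MonoidHom.map_closure, Subgroup.closure_le]
  rintro _ ⟨x, hx, rfl⟩
  have hconj : ((MulAut.conj conjugator).toMonoidHom x : M₄₉) =
      !![44, 24; 1, 25] * (x : M₄₉) * !![12, 12; 25, 27] := rfl
  simp only [genMatrices, Set.mem_insert_iff, Set.mem_singleton_iff, Set.mem_ofPred_eq] at hx
  rw [SetLike.mem_coe, mem_ratioPowSubgroup]
  rcases hx with h | h | h | h | h | h <;> rw [hconj, h] <;> decide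

lemma mem_map_conj_Hsub {y : GL (Fin 2) (ZMod 49)} (A : M₄₉) (hA : A ∈ genMatrices)
    (hy : ((conjugator⁻¹ * y * conjugator : GL (Fin 2) (ZMod 49)) : M₄₉) = A) : y ∈ conjHsub :=
  ⟨_, Subgroup.subset_closure (show _ ∈ genMatrices from hy ▸ hA), by simp [mul_assoc]⟩

lemma swapUnit_mem_map_conj_Hsub : swapUnit (ZMod 49) ∈ conjHsub :=
  mem_map_conj_Hsub !![1, 0; 37, 48] (by simp [genMatrices]) (by decide)

lemma diagUnits_const_mem_map_conj_Hsub (t : (ZMod 49)ˣ) : diagUnits _ (fun _ ↦ t) ∈ conjHsub := by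
  have h5 : diagUnits _ (fun _ ↦ unit49 5) ∈ conjHsub := by
    have h := mul_mem
      (mem_map_conj_Hsub (y := diagUnits _ ![unit49 46, unit49 8]) !![31, 17; 3, 23]
        (by simp [genMatrices]) (by decide))
      (mem_map_conj_Hsub (y := diagUnits _ ![unit49 31, unit49 19]) !![34, 26; 19, 16]
        (by simp [genMatrices]) (by decide))
    rwa [← map_mul, show ![unit49 46, unit49 8] * ![unit49 31, unit49 19] = fun _ ↦ unit49 5 by
      ext i; fin_cases i <;> decide] at h
  obtain ⟨k, rfl⟩ := Subgroup.mem_zpowers_iff.mp (zpowers_five ▸ Subgroup.mem_top t)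
  exact (map_zpow (diagUnits (ZMod 49)) (fun _ ↦ unit49 5) k) ▸ zpow_mem h5 k

lemma diagUnits_mulSingle_mem_map_conj_Hsub {s : (ZMod 49)ˣ} (hs : s ^ 6 = 1) :
    diagUnits _ (Pi.mulSingle 0 s) ∈ conjHsub := by
  have h19 : diagUnits _ (Pi.mulSingle 0 (unit49 19)) ∈ conjHsub := by
    have h := mem_map_conj_Hsub (y := diagUnits _ ![unit49 12, unit49 29]) !![20, 4; 18, 21]
      (by simp [genMatrices]) (by decide)
    rwa [show ![unit49 12, unit49 29] = Pi.mulSingle 0 (unit49 19) * fun _ ↦ unit49 29 by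
      ext i; fin_cases i <;> decide, map_mul,
      Subgroup.mul_mem_cancel_right _ (diagUnits_const_mem_map_conj_Hsub _)] at h
  have hs' : s ∈ (powMonoidHom 6).ker := hs
  obtain ⟨k, rfl⟩ := Subgroup.mem_zpowers_iff.mp (zpowers_nineteen ▸ hs')
  rw [← MonoidHom.mulSingle_apply, map_zpow, MonoidHom.mulSingle_apply, map_zpow]
  exact zpow_mem h19 k

lemma map_conj_Hsub_eq : conjHsub = ratioPowSubgroup (ZMod 49) 6 :=
  le_antisymm map_conj_Hsub_le <| ratioPowSubgroup_le_of_mem diagUnits_const_mem_map_conj_Hsub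
    (fun _ ↦ diagUnits_mulSingle_mem_map_conj_Hsub) swapUnit_mem_map_conj_Hsub

lemma csPlus49_eq : CsPlus49 = splitCartanNormalizer (ZMod 49) :=
  Subgroup.closure_eq (splitCartanNormalizer (ZMod 49))

end Level49

open SplitCartan Level49 in
/-- `C_s⁺(49)` consists exactly of the invertible diagonal and
antidiagonal matrices, and there is `g ∈ GL₂(ℤ/49ℤ)` such that `g·H·g⁻¹` is a
subgroup of `C_s⁺(49)` of index 7. -/
theorem stmt14 :
    (∀ x : GL (Fin 2) (ZMod 49), x ∈ CsPlus49 ↔ IsDiagOrAntidiag x) ∧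
    ∃ g : GL (Fin 2) (ZMod 49),
      Subgroup.map (MulAut.conj g).toMonoidHom Hsub ≤ CsPlus49 ∧
      Subgroup.relIndex (Subgroup.map (MulAut.conj g).toMonoidHom Hsub) CsPlus49 = 7 := by
  refine ⟨fun x ↦ by rw [csPlus49_eq]; rfl, conjugator, ?_, ?_⟩ <;>
    rw [map_conj_Hsub_eq, csPlus49_eq]
  · exact ratioPowSubgroup_le_splitCartanNormalizer 6
  · rw [relIndex_ratioPowSubgroup, card_range_powMonoidHom_six]
end
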